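/- For any a ≥ 0 and d ≥ 0, the shifted FI-module S_{+a}M(d) over a commutative ring R decomposes as a direct sum S_{+a}M(d) ≅ M(d) ⊕ Q_a, where Q_a is a free FI-module finitely generated in degree ≤ d − 1; explicitly, S_{+a}M(d) ≅ ⊕_{T ⊆ [d]} M(d − |T|) ⊗_R R[Inj(T, [-a])], with the summand for T = ∅ canonically identified with M(d). -/

import Mathlib

open CategoryTheory

/-- The category FI: objects are finite sets, morphisms are injections. -/
structure FI : Type 1 where
  carrier : Type
  [fintype : Fintype carrier]
  [decEq : DecidableEq carrier]

namespace FI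

instance : CoeSort FI Type := ⟨FI.carrier⟩
attribute [instance] FI.fintype FI.decEq

/-- Build an object of `FI` from a finite type. -/
def of (X : Type) [Fintype X] [DecidableEq X] : FI := ⟨X⟩

instance : Category FI where
  Hom S T := {f : S.carrier → T.carrier // Function.Injective f}
  id S := ⟨id, fun _ _ h => h⟩
  comp f g := ⟨g.1 ∘ f.1, fun _ _ h => f.2 (g.2 h)⟩
  id_comp _ := rfl
  comp_id _ := rfl
  assoc _ _ _ := rfl

/-- The standard object `[n] = {1, …, n}` of `FI`. -/
def obj' (n : ℕ) : FI := FI.of (Fin n)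

end FI

variable {R : Type} [CommRing R]

/-- A sub-FI-module of an FI-module `V` : a collection of submodules compatible
with all the induced maps. -/
structure SubFIModule (V : FI ⥤ ModuleCat R) where
  carrier : ∀ S : FI, Submodule R (V.obj S)
  map_mem : ∀ {S T : FI} (f : S ⟶ T) (v : V.obj S), v ∈ carrier S → V.map f v ∈ carrier T

/-- An FI-module is finitely generated if finitely many elements are contained in
no proper sub-FI-module. -/
def FIModuleFG (V : FI ⥤ ModuleCat R) : Prop :=
  ∃ (k : ℕ) (n : Fin k → ℕ) (v : ∀ i, V.obj (FI.obj' (n i))),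
    ∀ W : SubFIModule V, (∀ i, v i ∈ W.carrier (FI.obj' (n i))) → ∀ S, W.carrier S = ⊤

/-- An FI-module is generated in degree ≤ d if some set of elements of degrees ≤ d
is contained in no proper sub-FI-module. -/
def FIModuleGenLE (V : FI ⥤ ModuleCat R) (d : ℕ) : Prop :=
  ∃ (ι : Type) (n : ι → ℕ) (_ : ∀ i, n i ≤ d) (v : ∀ i, V.obj (FI.obj' (n i))),
    ∀ W : SubFIModule V, (∀ i, v i ∈ W.carrier (FI.obj' (n i))) → ∀ S, W.carrier S = ⊤

/-- The free FI-module `⊕_{i ∈ ι} M(d_i)` over `R`: it assigns to a finite set `S` the free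
`R`-module on the disjoint union over `i ∈ ι` of the sets of injections `[d_i] ↪ S`, with
maps induced by postcomposition. Taking `ι` a one-element set gives the FI-module
`M(d) = R[Hom_FI([d], −)]`. -/
noncomputable def FreeFIModule (R : Type) [CommRing R] (ι : Type) (ds : ι → ℕ) :
    FI ⥤ ModuleCat R where
  obj S := ModuleCat.of R ((Σ i : ι, (FI.obj' (ds i) ⟶ S)) →₀ R)
  map {S T} g := ModuleCat.ofHom (Finsupp.lmapDomain R R (fun p => ⟨p.1, p.2 ≫ g⟩))
  map_id := by
    intro S
    apply ModuleCat.hom_ext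
    exact Finsupp.lmapDomain_id R R
  map_comp := by
    intro S T U f g
    apply ModuleCat.hom_ext
    exact Finsupp.lmapDomain_comp R R
      (fun p : Σ i : ι, (FI.obj' (ds i) ⟶ S) => (⟨p.1, p.2 ≫ f⟩ : Σ i : ι, (FI.obj' (ds i) ⟶ T)))
      (fun p : Σ i : ι, (FI.obj' (ds i) ⟶ T) => (⟨p.1, p.2 ≫ g⟩ : Σ i : ι, (FI.obj' (ds i) ⟶ U)))

/-- The endofunctor `Ξ_a : FI → FI`, `S ↦ S ⊔ [-a]` (disjoint union with a fixed
`a`-element set). Precomposition with it is the positive shift functor `S_{+a}` on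
FI-modules: `(S_{+a}V) = Ξ_a ⋙ V`. -/
def shiftFI (a : ℕ) : FI ⥤ FI where
  obj S := FI.of (S.carrier ⊕ Fin a)
  map f := ⟨Sum.map f.1 id, f.2.sumMap (fun _ _ h => h)⟩
  map_id := by
    intro S
    apply Subtype.ext
    funext x
    cases x <;> rfl
  map_comp := by
    intro S T U f g
    apply Subtype.ext
    funext x
    cases x <;> rfl

/-- The FI-module `M(d) = R[Hom_FI([d], −)]`. -/
noncomputable def MFI (R : Type) [CommRing R] (d : ℕ) : FI ⥤ ModuleCat R :=
  FreeFIModule R PUnit (fun _ => d)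

/-!
An injection `[d] ↪ S ⊔ [-a]` is the same as the set `T ⊆ [d]` of points sent into `[-a]`,
an injection `T ↪ [-a]`, and an injection of the complement `[d] ∖ T ≅ [d - |T|]` into `S`.
This bijection is natural in `S`, and linearising it gives the decomposition. The summand
`T = ∅` is `M(d)`; every other summand is generated in degree `d - |T| < d`.
-/

namespace Function.Embedding

variable {X S A : Type*} [Fintype X] [DecidableEq X]

def piecewiseSum (T : Finset X) (g : T ↪ A) (h : ↥Tᶜ ↪ S) : X ↪ S ⊕ A where
  toFun x := if hx : x ∈ T then .inr (g ⟨x, hx⟩) else .inl (h ⟨x, Finset.mem_compl.2 hx⟩)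
  inj' x y hxy := by
    by_cases hx : x ∈ T <;> by_cases hy : y ∈ T <;>
      simp only [hx, hy, dite_true, dite_false, Sum.inr.injEq, Sum.inl.injEq, reduceCtorEq] at hxy
    · exact congrArg Subtype.val (g.injective hxy)
    · exact congrArg Subtype.val (h.injective hxy)

section

variable {T : Finset X} {g : T ↪ A} {h : ↥Tᶜ ↪ S} {x : X}

theorem piecewiseSum_apply_of_mem (hx : x ∈ T) : piecewiseSum T g h x = .inr (g ⟨x, hx⟩) :=
  dif_pos hx

theorem piecewiseSum_apply_of_notMem (hx : x ∉ T) :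
    piecewiseSum T g h x = .inl (h ⟨x, Finset.mem_compl.2 hx⟩) :=
  dif_neg hx

theorem isRight_piecewiseSum_apply : (piecewiseSum T g h x).isRight ↔ x ∈ T := by
  by_cases hx : x ∈ T <;> simp [piecewiseSum_apply_of_mem, piecewiseSum_apply_of_notMem, hx]

theorem piecewiseSum_trans_sumMap {S' : Type*} (φ : S ↪ S') :
    (piecewiseSum T g h).trans (sumMap φ (Embedding.refl A)) = piecewiseSum T g (h.trans φ) := by
  ext x
  by_cases hx : x ∈ T
  · simp [piecewiseSum_apply_of_mem hx]
  · simp [piecewiseSum_apply_of_notMem hx]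

end

theorem piecewiseSum_uncurry_injective :
    Function.Injective fun p : Σ T : Finset X, (T ↪ A) × (↥Tᶜ ↪ S) =>
      piecewiseSum p.1 p.2.1 p.2.2 := by
  rintro ⟨T, g, h⟩ ⟨T', g', h'⟩ hgh
  obtain rfl : T = T' := by
    ext x
    rw [← isRight_piecewiseSum_apply (g := g) (h := h),
      ← isRight_piecewiseSum_apply (g := g') (h := h'),
      show piecewiseSum T g h = piecewiseSum T' g' h' from hgh]
  have hg : g = g' := by
    ext ⟨x, hx⟩
    simpa [piecewiseSum_apply_of_mem hx] using DFunLike.congr_fun hgh x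
  have hh : h = h' := by
    ext ⟨x, hx⟩
    simpa [piecewiseSum_apply_of_notMem (Finset.mem_compl.1 hx)] using DFunLike.congr_fun hgh x
  rw [hg, hh]

theorem piecewiseSum_uncurry_surjective :
    Function.Surjective fun p : Σ T : Finset X, (T ↪ A) × (↥Tᶜ ↪ S) =>
      piecewiseSum p.1 p.2.1 p.2.2 := by
  intro f
  set T := Finset.univ.filter fun x => (f x).isRight
  have hr (x : T) : (f x).isRight := (Finset.mem_filter.1 x.2).2
  have hl (x : ↥Tᶜ) : (f x).isLeft := by simpa [T] using Finset.mem_compl.1 x.2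
  refine ⟨⟨T, ⟨fun x => (f x).getRight (hr x), fun x y hxy => Subtype.ext (f.injective ?_)⟩,
    ⟨fun x => (f x).getLeft (hl x), fun x y hxy => Subtype.ext (f.injective ?_)⟩⟩, ?_⟩
  · rw [← Sum.inr_getRight _ (hr x), ← Sum.inr_getRight _ (hr y)]
    exact congrArg Sum.inr hxy
  · rw [← Sum.inl_getLeft _ (hl x), ← Sum.inl_getLeft _ (hl y)]
    exact congrArg Sum.inl hxy
  · ext1 x
    by_cases hx : x ∈ T
    · exact (piecewiseSum_apply_of_mem hx).trans (Sum.inr_getRight _ (hr ⟨x, hx⟩))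
    · exact (piecewiseSum_apply_of_notMem hx).trans (Sum.inl_getLeft _ _)

noncomputable def piecewiseSumEquiv : (Σ T : Finset X, (T ↪ A) × (↥Tᶜ ↪ S)) ≃ (X ↪ S ⊕ A) :=
  Equiv.ofBijective _ ⟨piecewiseSum_uncurry_injective, piecewiseSum_uncurry_surjective⟩

end Function.Embedding

namespace FI

/-- `FreeFIModule R ι ds` is definitionally `sigmaHom ι ds ⋙ ModuleCat.free R`, so natural
bijections between these functors give isomorphisms of free FI-modules. -/
def sigmaHom (ι : Type) (ds : ι → ℕ) : FI ⥤ Type where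
  obj S := Σ i, (obj' (ds i) ⟶ S)
  map g := TypeCat.ofHom fun p => ⟨p.1, p.2 ≫ g⟩

def sigmaHomCongr {ι κ : Type} {ds : ι → ℕ} {es : κ → ℕ} (e : ι ≃ κ)
    (h : ∀ i, ds i = es (e i)) : sigmaHom ι ds ≅ sigmaHom κ es :=
  NatIso.ofComponents (fun S => Equiv.toIso <| e.sigmaCongr fun i =>
    (eqToIso (congrArg obj' (h i))).homCongr (Iso.refl S)) fun _ => rfl

def complEquivFin {d : ℕ} (T : Finset (Fin d)) : Fin (d - T.card) ≃ ↥Tᶜ :=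
  (Tᶜ.orderIsoOfFin (by simp [Finset.card_compl])).toEquiv

noncomputable def shiftSigmaHomEquiv (a d : ℕ) (S : FI) :
    (sigmaHom (Σ T : Finset (Fin d), (T ↪ Fin a)) fun p => d - p.1.card).obj S ≃
      (sigmaHom PUnit fun _ => d).obj ((shiftFI a).obj S) :=
  (Equiv.sigmaAssoc fun (T : Finset (Fin d)) _ => obj' (d - T.card) ⟶ S).trans <|
    (Equiv.sigmaCongrRight fun T =>
      (Equiv.sigmaEquivProd _ _).trans <| Equiv.prodCongr (Equiv.refl _) <|
        (Equiv.subtypeInjectiveEquivEmbedding _ _).trans <|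
          Equiv.embeddingCongr (complEquivFin T) (Equiv.refl _)).trans <|
    Function.Embedding.piecewiseSumEquiv.trans <|
      (Equiv.subtypeInjectiveEquivEmbedding _ _).symm.trans
        (Equiv.uniqueSigma fun _ : PUnit => obj' d ⟶ (shiftFI a).obj S).symm

noncomputable def shiftSigmaHomIso (a d : ℕ) :
    sigmaHom (Σ T : Finset (Fin d), (T ↪ Fin a)) (fun p => d - p.1.card) ≅
      shiftFI a ⋙ sigmaHom PUnit fun _ => d :=
  NatIso.ofComponents (fun S => (shiftSigmaHomEquiv a d S).toIso) fun {S S'} φ => by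
    ext ⟨⟨T, g⟩, h⟩
    refine Sigma.ext rfl (heq_of_eq (Subtype.ext ?_))
    exact congrArg DFunLike.coe (Function.Embedding.piecewiseSum_trans_sumMap (g := g)
      (h := Equiv.embeddingCongr (complEquivFin T) (Equiv.refl _)
        (Equiv.subtypeInjectiveEquivEmbedding _ _ h)) ⟨φ.1, φ.2⟩).symm

end FI

theorem sub_card_lt_of_ne_empty {a d : ℕ} {p : Σ T : Finset (Fin d), (T ↪ Fin a)}
    (hp : p ≠ ⟨∅, Function.Embedding.ofIsEmpty⟩) : d - p.1.card < d := by
  obtain ⟨T, g⟩ := p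
  obtain ⟨x, hx⟩ : T.Nonempty := by
    rw [Finset.nonempty_iff_ne_empty]
    rintro rfl
    exact hp (congrArg _ (Subsingleton.elim _ _))
  exact Nat.sub_lt (Fin.pos x) (Finset.card_pos.2 ⟨x, hx⟩)

/-- **Decomposition of shifts of free FI-modules** (Church–Ellenberg–Farb–Nagpal,
Proposition 2.12). For `a, d ≥ 0`, the shifted FI-module `S_{+a}M(d)` decomposes as
`M(d) ⊕ Q_a` where `Q_a` is a free FI-module finitely generated in degree ≤ d − 1;
explicitly, `S_{+a}M(d) ≅ ⊕_{T ⊆ [d]} M(d − |T|) ⊗_R R[Inj(T, [-a])]` (the summand for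
`T = ∅` being `M(d)`). -/
theorem shift_of_free_FIModule_decomposition
    (R : Type) [CommRing R] (a d : ℕ) :
    (∃ (ι' : Type) (_ : Finite ι') (ds' : ι' → ℕ), (∀ i, ds' i < d) ∧
      Nonempty ((shiftFI a ⋙ MFI R d) ≅
        FreeFIModule R (Option ι') (fun o => o.elim d ds'))) ∧
    Nonempty ((shiftFI a ⋙ MFI R d) ≅
      FreeFIModule R (Σ T : Finset (Fin d), ({x // x ∈ T} ↪ Fin a))
        (fun p => d - p.1.card)) := by
  let p₀ : Σ T : Finset (Fin d), (T ↪ Fin a) := ⟨∅, Function.Embedding.ofIsEmpty⟩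
  have hdeg : ∀ o : Option {p // p ≠ p₀},
      o.elim d (fun p => d - p.1.1.card) = d - (Equiv.optionSubtypeNe p₀ o).1.card := by
    rintro (_ | _) <;> rfl
  let shift := (FI.shiftSigmaHomIso a d).symm
  refine ⟨⟨{p // p ≠ p₀}, inferInstance, fun p => d - p.1.1.card,
    fun p => sub_card_lt_of_ne_empty p.2, ⟨?_⟩⟩, ⟨Functor.isoWhiskerRight shift (ModuleCat.free R)⟩⟩
  exact Functor.isoWhiskerRight (shift ≪≫ (FI.sigmaHomCongr (Equiv.optionSubtypeNe p₀) hdeg).symm)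
    (ModuleCat.free R)
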